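/- arXiv:2405.07398 — 7 statements merged into one kernel-verified Lean document; each statement's English description precedes it below -/
import Mathlib

section
/- If γ₁, γ₂ : [0,1] → Sp(2n) are both positive paths, then their pointwise product t ↦ γ₁(t)·γ₂(t) is also a positive path. Specifically, if γ₁'(t) = J P₁(t) γ₁(t) and γ₂'(t) = J P₂(t) γ₂(t) with P₁(t), P₂(t) symmetric positive definite, then (γ₁γ₂)'(t) = J [P₁(t) + γ₁(t)⁻ᵀ P₂(t) γ₁(t)⁻¹] γ₁(t)γ₂(t), and P₁(t) + γ₁(t)⁻ᵀ P₂(t) γ₁(t)⁻¹ is symmetric positive definite. -/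
/-!
Differentiating the product gives `(γ₁γ₂)' = J P₁ γ₁ γ₂ + γ₁ J P₂ γ₂`. Since `γ₁` is symplectic,
`γ₁ J = J γ₁⁻ᵀ`, so the second term is `J (γ₁⁻ᵀ P₂ γ₁⁻¹) γ₁ γ₂`. The matrix `γ₁⁻ᵀ P₂ γ₁⁻¹` is a
congruence transform of `P₂` by an invertible matrix, hence positive definite, and so is its sum
with `P₁`.
-/

open Matrix Set

noncomputable section

def J2 : Matrix (Fin 2) (Fin 2) ℝ := !![0, -1; 1, 0]

/-- The standard symplectic matrix `J = diag(J₂, …, J₂)`. -/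
def Jn (n : ℕ) : Matrix (Fin 2 × Fin n) (Fin 2 × Fin n) ℝ :=
  Matrix.blockDiagonal fun _ => J2

lemma J2_mul_self : J2 * J2 = -1 := by
  ext i j
  fin_cases i <;> fin_cases j <;> simp [J2, Matrix.mul_apply, Fin.sum_univ_two]

lemma Jn_mul_self (n : ℕ) : Jn n * Jn n = -1 := by
  rw [Jn, ← blockDiagonal_mul, J2_mul_self, ← blockDiagonal_one, ← blockDiagonal_neg]
  rfl

namespace Matrix

section Symplectic

variable {m R : Type*} [Fintype m] [DecidableEq m] [CommRing R] {J M : Matrix m m R}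

lemma neg_mul_transpose_mul_mul_eq_one (hJ : J * J = -1) (hM : Mᵀ * J * M = J) :
    -(J * Mᵀ * J) * M = 1 := by
  rw [Matrix.neg_mul, Matrix.mul_assoc, Matrix.mul_assoc, ← Matrix.mul_assoc Mᵀ, hM, hJ, neg_neg]

lemma inv_eq_neg_mul_transpose_mul (hJ : J * J = -1) (hM : Mᵀ * J * M = J) :
    M⁻¹ = -(J * Mᵀ * J) :=
  inv_eq_left_inv (neg_mul_transpose_mul_mul_eq_one hJ hM)

lemma mul_mul_transpose_eq (hJ : J * J = -1) (hM : Mᵀ * J * M = J) : M * J * Mᵀ = J := by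
  have hright : M * -(J * Mᵀ * J) = 1 :=
    mul_eq_one_comm.mp (neg_mul_transpose_mul_mul_eq_one hJ hM)
  calc M * J * Mᵀ = M * -(J * Mᵀ * J) * J := by
        simp only [Matrix.mul_neg, Matrix.neg_mul, Matrix.mul_assoc, hJ, Matrix.mul_one, neg_neg]
    _ = J := by rw [hright, Matrix.one_mul]

lemma mul_eq_mul_transpose_inv (hJ : J * J = -1) (hM : Mᵀ * J * M = J) :
    M * J = J * (M⁻¹)ᵀ := by
  have hinv : Mᵀ * (M⁻¹)ᵀ = 1 := by
    rw [← transpose_mul, inv_eq_neg_mul_transpose_mul hJ hM,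
      neg_mul_transpose_mul_mul_eq_one hJ hM, transpose_one]
  calc M * J = M * J * (Mᵀ * (M⁻¹)ᵀ) := by rw [hinv, Matrix.mul_one]
    _ = J * (M⁻¹)ᵀ := by rw [← Matrix.mul_assoc, mul_mul_transpose_eq hJ hM]

end Symplectic

lemma IsSymm.transpose_mul_mul {m n R : Type*} [Fintype m] [CommSemiring R]
    {A : Matrix m m R} (hA : A.IsSymm) (B : Matrix m n R) : (Bᵀ * A * B).IsSymm := by
  rw [IsSymm, transpose_mul, transpose_mul, transpose_transpose, hA.eq, Matrix.mul_assoc]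

lemma PosDef.transpose_mul_mul_same {m R : Type*} [Fintype m] [DecidableEq m]
    [CommRing R] [PartialOrder R] [StarRing R] [TrivialStar R]
    {A B : Matrix m m R} (hA : A.PosDef) (hB : IsUnit B) : (Bᵀ * A * B).PosDef := by
  rw [← conjTranspose_eq_transpose_of_trivial]
  exact hA.conjTranspose_mul_mul_same (mulVec_injective_of_isUnit hB)

lemma hasDerivAt_mul_apply {𝕜 : Type*} [NontriviallyNormedField 𝕜] {l m p : Type*} [Fintype m]
    {A : 𝕜 → Matrix l m 𝕜} {B : 𝕜 → Matrix m p 𝕜} {A' : Matrix l m 𝕜} {B' : Matrix m p 𝕜}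
    {t : 𝕜} (hA : ∀ i k, HasDerivAt (fun s => A s i k) (A' i k) t)
    (hB : ∀ k j, HasDerivAt (fun s => B s k j) (B' k j) t) (i : l) (j : p) :
    HasDerivAt (fun s => (A s * B s) i j) ((A' * B t + A t * B') i j) t := by
  simp only [add_apply, mul_apply, ← Finset.sum_add_distrib]
  exact HasDerivAt.fun_sum fun k _ => (hA i k).mul (hB k j)

end Matrix

/-- Used with `K = M⁻ᵀ`, `N = M⁻¹`: the Leibniz derivative of `γ₁γ₂`, rewritten. -/
lemma hamiltonian_product_rule {A : Type*} [Ring A] {J M N K P Q X : A}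
    (hMJ : M * J = J * K) (hNM : N * M = 1) :
    J * P * M * X + M * (J * Q * X) = J * (P + K * Q * N) * (M * X) := by
  calc J * P * M * X + M * (J * Q * X) = J * P * M * X + (M * J) * Q * (N * M) * X := by
        rw [hNM]; noncomm_ring
    _ = J * (P + K * Q * N) * (M * X) := by rw [hMJ]; noncomm_ring

theorem product_of_positive_paths_general {n : ℕ}
    (γ₁ γ₂ P₁ P₂ : ℝ → Matrix (Fin 2 × Fin n) (Fin 2 × Fin n) ℝ)
    (hsp₁ : ∀ t ∈ Icc (0:ℝ) 1, (γ₁ t)ᵀ * Jn n * γ₁ t = Jn n)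
    (hP₁ : ∀ t ∈ Icc (0:ℝ) 1, (P₁ t)ᵀ = P₁ t ∧ (P₁ t).PosDef)
    (hP₂ : ∀ t ∈ Icc (0:ℝ) 1, (P₂ t)ᵀ = P₂ t ∧ (P₂ t).PosDef)
    (hd₁ : ∀ t ∈ Icc (0:ℝ) 1, ∀ i j,
      HasDerivAt (fun s => γ₁ s i j) ((Jn n * P₁ t * γ₁ t) i j) t)
    (hd₂ : ∀ t ∈ Icc (0:ℝ) 1, ∀ i j,
      HasDerivAt (fun s => γ₂ s i j) ((Jn n * P₂ t * γ₂ t) i j) t) :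
    ∀ t ∈ Icc (0:ℝ) 1,
      (P₁ t + ((γ₁ t)⁻¹)ᵀ * P₂ t * (γ₁ t)⁻¹)ᵀ
          = P₁ t + ((γ₁ t)⁻¹)ᵀ * P₂ t * (γ₁ t)⁻¹ ∧
      (P₁ t + ((γ₁ t)⁻¹)ᵀ * P₂ t * (γ₁ t)⁻¹).PosDef ∧
      ∀ i j, HasDerivAt (fun s => (γ₁ s * γ₂ s) i j)
        ((Jn n * (P₁ t + ((γ₁ t)⁻¹)ᵀ * P₂ t * (γ₁ t)⁻¹) * (γ₁ t * γ₂ t)) i j) t := by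
  intro t ht
  obtain ⟨hsymm₁, hpos₁⟩ := hP₁ t ht
  obtain ⟨hsymm₂, hpos₂⟩ := hP₂ t ht
  have hsymp := hsp₁ t ht
  have hinv_mul : (γ₁ t)⁻¹ * γ₁ t = 1 := by
    rw [inv_eq_neg_mul_transpose_mul (Jn_mul_self n) hsymp,
      neg_mul_transpose_mul_mul_eq_one (Jn_mul_self n) hsymp]
  have hunit_inv : IsUnit (γ₁ t)⁻¹ := isUnit_nonsing_inv_iff.mpr <|
    (isUnit_iff_isUnit_det _).mpr (isUnit_det_of_left_inverse hinv_mul)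
  refine ⟨IsSymm.add hsymm₁ (IsSymm.transpose_mul_mul hsymm₂ _),
    hpos₁.add (hpos₂.transpose_mul_mul_same hunit_inv), fun i j => ?_⟩
  rw [← hamiltonian_product_rule (mul_eq_mul_transpose_inv (Jn_mul_self n) hsymp) hinv_mul]
  exact hasDerivAt_mul_apply (hd₁ t ht) (hd₂ t ht) i j

/-- The pointwise product of two positive paths in `Sp(2n)` is a positive path, with
the explicit formula `(γ₁γ₂)' = J [P₁ + γ₁⁻ᵀ P₂ γ₁⁻¹] γ₁γ₂`, where
`P₁ + γ₁⁻ᵀ P₂ γ₁⁻¹` is symmetric positive definite. -/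
theorem product_of_positive_paths {n : ℕ}
    (γ₁ γ₂ P₁ P₂ : ℝ → Matrix (Fin 2 × Fin n) (Fin 2 × Fin n) ℝ)
    (hsp₁ : ∀ t ∈ Icc (0:ℝ) 1, (γ₁ t)ᵀ * Jn n * γ₁ t = Jn n)
    (hsp₂ : ∀ t ∈ Icc (0:ℝ) 1, (γ₂ t)ᵀ * Jn n * γ₂ t = Jn n)
    (hP₁ : ∀ t ∈ Icc (0:ℝ) 1, (P₁ t)ᵀ = P₁ t ∧ (P₁ t).PosDef)
    (hP₂ : ∀ t ∈ Icc (0:ℝ) 1, (P₂ t)ᵀ = P₂ t ∧ (P₂ t).PosDef)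
    (hd₁ : ∀ t ∈ Icc (0:ℝ) 1, ∀ i j,
      HasDerivAt (fun s => γ₁ s i j) ((Jn n * P₁ t * γ₁ t) i j) t)
    (hd₂ : ∀ t ∈ Icc (0:ℝ) 1, ∀ i j,
      HasDerivAt (fun s => γ₂ s i j) ((Jn n * P₂ t * γ₂ t) i j) t) :
    ∀ t ∈ Icc (0:ℝ) 1,
      (P₁ t + ((γ₁ t)⁻¹)ᵀ * P₂ t * (γ₁ t)⁻¹)ᵀ
          = P₁ t + ((γ₁ t)⁻¹)ᵀ * P₂ t * (γ₁ t)⁻¹ ∧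
      (P₁ t + ((γ₁ t)⁻¹)ᵀ * P₂ t * (γ₁ t)⁻¹).PosDef ∧
      ∀ i j, HasDerivAt (fun s => (γ₁ s * γ₂ s) i j)
        ((Jn n * (P₁ t + ((γ₁ t)⁻¹)ᵀ * P₂ t * (γ₁ t)⁻¹) * (γ₁ t * γ₂ t)) i j) t :=
  product_of_positive_paths_general γ₁ γ₂ P₁ P₂ hsp₁ hP₁ hP₂ hd₁ hd₂
end
end

section
/- Let γ : [0,1] → Sp(2n) be a positive path. Then there exists ε > 0 such that for every θ ∈ (−ε, ε), the path t ↦ γ(t)·R₂ₙ(θt) is also a positive path, where R₂ₙ(α) = diag(R(α),…,R(α)) is the block-diagonal matrix consisting of n copies of the 2×2 rotation matrix R(α). -/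
/-! The new path is positive with `P' = P + θ Q`, where `Q = γ⁻ᵀ γ⁻¹`. Differentiating,
`(γ R₂ₙ(θt))' = J P γ R₂ₙ(θt) + θ γ J R₂ₙ(θt)`, and symplecticity of `γ` gives `γ J = J Q γ`.
Positive definiteness of `P + θ Q` for all `t ∈ [0,1]` and all small `θ` is a tube-lemma
argument: `(θ, t, x) ↦ xᵀ (P(t) + θ Q(t)) x` is continuous, and positive at `θ = 0` on the
compact set `[0,1] × S`, `S` the unit sphere. -/

open Matrix Set

noncomputable section

/-- The 2×2 rotation matrix `R(α)`. -/
def Rot (α : ℝ) : Matrix (Fin 2) (Fin 2) ℝ :=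
  !![Real.cos α, -Real.sin α; Real.sin α, Real.cos α]

/-- `R₂ₙ(α) = diag(R(α), …, R(α))`. -/
def Rot2n (n : ℕ) (α : ℝ) : Matrix (Fin 2 × Fin n) (Fin 2 × Fin n) ℝ :=
  Matrix.blockDiagonal fun _ => Rot α

open Filter Topology

lemma J2_mul_transpose : J2 * J2ᵀ = 1 := by
  ext i j; fin_cases i <;> fin_cases j <;> simp [J2, mul_apply, Fin.sum_univ_two]

lemma Jn_mul_transpose (n : ℕ) : Jn n * (Jn n)ᵀ = 1 := by
  rw [Jn, blockDiagonal_transpose, ← blockDiagonal_mul, J2_mul_transpose]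
  exact blockDiagonal_one

lemma hasDerivAt_Rot (α : ℝ) (a b : Fin 2) :
    HasDerivAt (fun β => Rot β a b) ((J2 * Rot α) a b) α := by
  fin_cases a <;> fin_cases b <;> simp [Rot, J2, mul_apply, Fin.sum_univ_two]
  · exact Real.hasDerivAt_cos α
  · exact (Real.hasDerivAt_sin α).neg
  · exact Real.hasDerivAt_sin α
  · exact Real.hasDerivAt_cos α

lemma hasDerivAt_Rot2n (n : ℕ) (α : ℝ) (k l : Fin 2 × Fin n) :
    HasDerivAt (fun β => Rot2n n β k l) ((Jn n * Rot2n n α) k l) α := by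
  obtain ⟨a, i⟩ := k
  obtain ⟨b, j⟩ := l
  simp only [Jn, Rot2n, ← blockDiagonal_mul, blockDiagonal_apply]
  split_ifs
  · exact hasDerivAt_Rot α a b
  · exact hasDerivAt_const α 0

lemma hasDerivAt_matrix_mul_apply {𝕜 l m p : Type*} [NontriviallyNormedField 𝕜] [Fintype m]
    {A : 𝕜 → Matrix l m 𝕜} {B : 𝕜 → Matrix m p 𝕜} {A' : Matrix l m 𝕜} {B' : Matrix m p 𝕜}
    {t : 𝕜} (hA : ∀ i j, HasDerivAt (fun s => A s i j) (A' i j) t)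
    (hB : ∀ i j, HasDerivAt (fun s => B s i j) (B' i j) t) (i : l) (j : p) :
    HasDerivAt (fun s => (A s * B s) i j) ((A' * B t + A t * B') i j) t := by
  simp only [mul_apply, Matrix.add_apply, ← Finset.sum_add_distrib]
  exact HasDerivAt.fun_sum fun k _ => (hA i k).fun_mul (hB k j)

lemma mul_transpose_mul_self_mul_of_symplectic {ι R : Type*} [Fintype ι] [DecidableEq ι]
    [CommRing R] {J γ : Matrix ι ι R} (hJ : J * Jᵀ = 1) (hγ : γᵀ * J * γ = J) :
    J * ((γᵀ * J)ᵀ * (γᵀ * J)) * γ = γ * J := by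
  calc J * ((γᵀ * J)ᵀ * (γᵀ * J)) * γ = J * Jᵀ * γ * (γᵀ * J * γ) := by
        simp only [transpose_mul, transpose_transpose, Matrix.mul_assoc]
    _ = γ * J := by rw [hJ, hγ, Matrix.one_mul]

lemma hasDerivAt_mul_Rot2n_apply {n : ℕ} {γ : ℝ → Matrix (Fin 2 × Fin n) (Fin 2 × Fin n) ℝ}
    {P Q : Matrix (Fin 2 × Fin n) (Fin 2 × Fin n) ℝ} {θ t : ℝ} (hQ : Jn n * Q * γ t = γ t * Jn n)
    (hd : ∀ i j, HasDerivAt (fun s => γ s i j) ((Jn n * P * γ t) i j) t) (i j : Fin 2 × Fin n) :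
    HasDerivAt (fun s => (γ s * Rot2n n (θ * s)) i j)
      ((Jn n * (P + θ • Q) * (γ t * Rot2n n (θ * t))) i j) t := by
  have hR : ∀ k l, HasDerivAt (fun s => Rot2n n (θ * s) k l)
      ((θ • (Jn n * Rot2n n (θ * t))) k l) t := fun k l => by
    simpa [Function.comp_def, mul_comm] using
      (hasDerivAt_Rot2n n (θ * t) k l).comp t ((hasDerivAt_id t).const_mul θ)
  have hsplit : Jn n * (P + θ • Q) * (γ t * Rot2n n (θ * t))
      = Jn n * P * γ t * Rot2n n (θ * t) + γ t * θ • (Jn n * Rot2n n (θ * t)) :=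
    calc _ = Jn n * P * γ t * Rot2n n (θ * t) + θ • (Jn n * Q * γ t * Rot2n n (θ * t)) := by
          simp only [mul_add, add_mul, Matrix.smul_mul, Matrix.mul_smul, Matrix.mul_assoc]
      _ = _ := by rw [hQ]; simp only [Matrix.mul_assoc, Matrix.mul_smul]
  rw [hsplit]
  exact hasDerivAt_matrix_mul_apply hd hR i j

lemma Matrix.PosDef.of_forall_norm_eq_one {ι : Type*} [Fintype ι] {A : Matrix ι ι ℝ}
    (hA : A.IsHermitian) (h : ∀ x : ι → ℝ, ‖x‖ = 1 → 0 < x ⬝ᵥ A *ᵥ x) : A.PosDef := by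
  refine .of_dotProduct_mulVec_pos hA fun x hx => ?_
  have hx' : 0 < ‖x‖ := norm_pos_iff.2 hx
  have hu : ‖‖x‖⁻¹ • x‖ = 1 := by rw [norm_smul, norm_inv, norm_norm, inv_mul_cancel₀ hx'.ne']
  have hux := h _ hu
  rw [mulVec_smul, smul_dotProduct, dotProduct_smul, smul_eq_mul, smul_eq_mul] at hux
  rw [star_trivial]
  exact pos_of_mul_pos_right (pos_of_mul_pos_right hux (by positivity)) (by positivity)

theorem eventually_forall_posDef_add_smul {ι X : Type*} [Fintype ι] [TopologicalSpace X]
    {K : Set X} (hK : IsCompact K) {P Q : X → Matrix ι ι ℝ} (hPc : ContinuousOn P K)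
    (hQc : ContinuousOn Q K) (hP : ∀ t ∈ K, (P t).PosDef) (hQ : ∀ t ∈ K, (Q t).IsHermitian) :
    ∀ᶠ θ in 𝓝 (0 : ℝ), ∀ t ∈ K, (P t + θ • Q t).PosDef := by
  set S := K ×ˢ Metric.sphere (0 : ι → ℝ) 1
  have hform : ContinuousOn (fun z : ℝ × X × (ι → ℝ) => z.2.2 ⬝ᵥ (P z.2.1 + z.1 • Q z.2.1) *ᵥ z.2.2)
      (univ ×ˢ S) := by
    have hmaps : MapsTo (fun z : ℝ × X × (ι → ℝ) => z.2.1) (univ ×ˢ S) K := fun z hz => hz.2.1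
    have hP' : ContinuousOn (fun z : ℝ × X × (ι → ℝ) => P z.2.1) (univ ×ˢ S) :=
      hPc.comp (by fun_prop) hmaps
    have hQ' : ContinuousOn (fun z : ℝ × X × (ι → ℝ) => Q z.2.1) (univ ×ˢ S) :=
      hQc.comp (by fun_prop) hmaps
    fun_prop
  have hS : ∀ᶠ θ in 𝓝 (0 : ℝ), ∀ p ∈ S, 0 < p.2 ⬝ᵥ (P p.1 + θ • Q p.1) *ᵥ p.2 := by
    refine ((hK.prod (isCompact_sphere 0 1)).eventually_forall_of_forall_eventually
      (P := fun θ p => p ∈ S → 0 < p.2 ⬝ᵥ (P p.1 + θ • Q p.1) *ᵥ p.2) fun p hp => ?_).mono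
      fun θ h p hp => h p hp hp
    have hp0 : p.2 ≠ 0 := ne_zero_of_mem_unit_sphere ⟨p.2, hp.2⟩
    have hpos : 0 < p.2 ⬝ᵥ (P p.1 + (0 : ℝ) • Q p.1) *ᵥ p.2 := by
      simpa using (hP p.1 hp.1).dotProduct_mulVec_pos hp0
    have hnear := (hform (0, p) ⟨trivial, hp⟩).eventually (lt_mem_nhds hpos)
    rw [eventually_nhdsWithin_iff] at hnear
    exact hnear.mono fun z hz hzS => hz ⟨trivial, hzS⟩
  filter_upwards [hS] with θ hθ t ht
  refine .of_forall_norm_eq_one ((hP t ht).isHermitian.add ((hQ t ht).smul (.all θ)))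
    fun x hx => hθ (t, x) ⟨ht, by simpa using hx⟩

/-- If `γ` is a positive path in `Sp(2n)`, then there is `ε > 0` such that for every
`θ ∈ (−ε, ε)` the path `t ↦ γ(t) · R₂ₙ(θt)` is again a positive path. -/
theorem perturbation_by_rotation_is_positive {n : ℕ}
    (γ P : ℝ → Matrix (Fin 2 × Fin n) (Fin 2 × Fin n) ℝ)
    (hsp : ∀ t ∈ Icc (0:ℝ) 1, (γ t)ᵀ * Jn n * γ t = Jn n)
    (hPc : ∀ i j, ContinuousOn (fun t => P t i j) (Icc (0:ℝ) 1))
    (hP : ∀ t ∈ Icc (0:ℝ) 1, (P t)ᵀ = P t ∧ (P t).PosDef)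
    (hd : ∀ t ∈ Icc (0:ℝ) 1, ∀ i j,
      HasDerivAt (fun s => γ s i j) ((Jn n * P t * γ t) i j) t) :
    ∃ ε > (0:ℝ), ∀ θ ∈ Ioo (-ε) ε,
      ∃ P' : ℝ → Matrix (Fin 2 × Fin n) (Fin 2 × Fin n) ℝ,
        ∀ t ∈ Icc (0:ℝ) 1, (P' t)ᵀ = P' t ∧ (P' t).PosDef ∧
          ∀ i j, HasDerivAt (fun s => (γ s * Rot2n n (θ * s)) i j)
            ((Jn n * P' t * (γ t * Rot2n n (θ * t))) i j) t := by
  -- `Q t = γ(t)⁻ᵀ γ(t)⁻¹`, as `γᵀ J = J γ⁻¹` and `J` is orthogonal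
  set Q := fun t => ((γ t)ᵀ * Jn n)ᵀ * ((γ t)ᵀ * Jn n)
  have hγc : ContinuousOn γ (Icc 0 1) := continuousOn_pi.2 fun i => continuousOn_pi.2 fun j t ht =>
    (hd t ht i j).continuousAt.continuousWithinAt
  have hQc : ContinuousOn Q (Icc 0 1) := by fun_prop
  have hQ (t : ℝ) : (Q t).IsHermitian := isHermitian_iff_isSymm.2 (isSymm_transpose_mul_self _)
  obtain ⟨ε, hε, hpos⟩ := Metric.eventually_nhds_iff.1 <|
    eventually_forall_posDef_add_smul isCompact_Icc
      (continuousOn_pi.2 fun i => continuousOn_pi.2 (hPc i)) hQc (fun t ht => (hP t ht).2)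
      fun t _ => hQ t
  refine ⟨ε, hε, fun θ hθ => ⟨fun t => P t + θ • Q t, fun t ht => ?_⟩⟩
  have hPθ : (P t + θ • Q t).PosDef := hpos (by rwa [Real.dist_0_eq_abs, abs_lt]) t ht
  exact ⟨(isHermitian_iff_isSymm.1 hPθ.isHermitian).eq, hPθ,
    hasDerivAt_mul_Rot2n_apply
      (mul_transpose_mul_self_mul_of_symplectic (Jn_mul_transpose n) (hsp t ht)) (hd t ht)⟩
end
end

section
/- Let θ ∈ (0,2π)\{π} and b = (b₁,b₂,b₃,b₄) ∈ ℝ⁴, and let N₂(θ,b) be the 4×4 matrix with rows (cosθ, b₁, −sinθ, b₂), (0, cosθ, 0, −sinθ), (sinθ, b₃, cosθ, b₄), (0, sinθ, 0, cosθ). Then N₂(θ,b) ∈ Sp(4) if and only if (b₂−b₃)cosθ + (b₁+b₄)sinθ = 0. Moreover, if N₂(θ,b) ∈ Sp(4), then e^{iθ} and e^{−iθ} are eigenvalues of N₂(θ,b) of algebraic multiplicity 2, and dim_ℂ ker_ℂ(N₂(θ,b) − e^{iθ}I) = 1 if and only if b₂ − b₃ ≠ 0. -/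
open Matrix Set Polynomial

set_option maxHeartbeats 1600000

noncomputable section

def J4 : Matrix (Fin 4) (Fin 4) ℝ :=
  !![0, -1, 0, 0; 1, 0, 0, 0; 0, 0, 0, -1; 0, 0, 1, 0]

/-- The normal form `N₂(θ, b)`. -/
def N2 (θ b₁ b₂ b₃ b₄ : ℝ) : Matrix (Fin 4) (Fin 4) ℝ :=
  !![Real.cos θ, b₁, -Real.sin θ, b₂;
     0, Real.cos θ, 0, -Real.sin θ;
     Real.sin θ, b₃, Real.cos θ, b₄;
     0, Real.sin θ, 0, Real.cos θ]

/-- `N₂(θ,b) ∈ Sp(4)` iff `(b₂−b₃)cosθ + (b₁+b₄)sinθ = 0`; in that case `e^{±iθ}` are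
eigenvalues of algebraic multiplicity 2, and the `e^{iθ}`-eigenspace is
one-dimensional iff `b₂ − b₃ ≠ 0`. -/
theorem N2_properties (θ b₁ b₂ b₃ b₄ : ℝ)
    (hθ : θ ∈ Ioo (0:ℝ) (2 * Real.pi)) (hθπ : θ ≠ Real.pi) :
    ((N2 θ b₁ b₂ b₃ b₄)ᵀ * J4 * N2 θ b₁ b₂ b₃ b₄ = J4 ↔
      (b₂ - b₃) * Real.cos θ + (b₁ + b₄) * Real.sin θ = 0) ∧
    ((N2 θ b₁ b₂ b₃ b₄)ᵀ * J4 * N2 θ b₁ b₂ b₃ b₄ = J4 →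
      (((N2 θ b₁ b₂ b₃ b₄).map (fun x : ℝ => (x : ℂ))).charpoly =
          (X - C (Complex.exp (θ * Complex.I)))^2
            * (X - C (Complex.exp (-(θ * Complex.I))))^2) ∧
      (Module.finrank ℂ
          (LinearMap.ker
            (((N2 θ b₁ b₂ b₃ b₄).map (fun x : ℝ => (x : ℂ))
              - Complex.exp (θ * Complex.I) • (1 : Matrix (Fin 4) (Fin 4) ℂ)).mulVecLin))
        = 1 ↔ b₂ - b₃ ≠ 0)) := by
  obtain ⟨hθ0, hθ2⟩ := hθ
  -- `sin θ ≠ 0`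
  have hsn : Real.sin θ ≠ 0 := by
    rcases lt_or_gt_of_ne hθπ with h | h
    · exact ne_of_gt (Real.sin_pos_of_pos_of_lt_pi hθ0 h)
    · have : Real.sin (θ - 2*Real.pi) < 0 := by
        apply Real.sin_neg_of_neg_of_neg_pi_lt (by linarith)
        nlinarith [Real.pi_pos]
      rw [Real.sin_sub_two_pi] at this
      exact ne_of_lt this
  have pyth := Real.sin_sq_add_cos_sq θ
  -- Part 1: the symplectic condition
  have part1 : (N2 θ b₁ b₂ b₃ b₄)ᵀ * J4 * N2 θ b₁ b₂ b₃ b₄ = J4 ↔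
      (b₂ - b₃) * Real.cos θ + (b₁ + b₄) * Real.sin θ = 0 := by
    constructor
    · intro h
      have := congrFun (congrFun h 1) 3
      simp [N2, J4, Matrix.mul_apply, Fin.sum_univ_four, Matrix.transpose_apply,
        Matrix.vecHead, Matrix.vecTail] at this
      linarith [this]
    · intro h
      ext i j
      fin_cases i <;> fin_cases j <;>
        simp [N2, J4, Matrix.mul_apply, Fin.sum_univ_four, Matrix.transpose_apply,
          Matrix.vecHead, Matrix.vecTail] <;> nlinarith [pyth, h]
  refine ⟨part1, fun hsp => ⟨?_, ?_⟩⟩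
  -- Part 2: the characteristic polynomial
  · set c := (Real.cos θ : ℂ) with hcdef
    set s := (Real.sin θ : ℂ) with hsdef
    have he : Complex.exp (θ * Complex.I) = c + s * Complex.I := by
      rw [Complex.exp_mul_I]; simp [hcdef, hsdef]
    have hf : Complex.exp (-(θ * Complex.I)) = c - s * Complex.I := by
      rw [← neg_mul, Complex.exp_mul_I]; simp [hcdef, hsdef]; ring
    have hcm : Matrix.charmatrix ((N2 θ b₁ b₂ b₃ b₄).map (fun x : ℝ => (x : ℂ)))
        = !![X - C c, -C (b₁:ℂ), C s, -C (b₂:ℂ);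
             0, X - C c, 0, C s;
             -C s, -C (b₃:ℂ), X - C c, -C (b₄:ℂ);
             0, -C s, 0, X - C c] := by
      ext i j
      fin_cases i <;> fin_cases j <;>
        simp [Matrix.charmatrix_apply, N2, Matrix.map_apply, Matrix.one_apply, hcdef, hsdef]
    have key : ((N2 θ b₁ b₂ b₃ b₄).map (fun x : ℝ => (x : ℂ))).charpoly
        = ((X - C c)^2 + (C s)^2)^2 := by
      rw [Matrix.charpoly, hcm]
      rw [Matrix.det_succ_row_zero]
      simp (config := { decide := true }) [Fin.sum_univ_succ, Matrix.det_fin_three,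
        Matrix.submatrix_apply, Fin.succAbove,
        show (Fin.castSucc 2 : Fin 4) = 2 from rfl]
      ring
    rw [key, he, hf]
    have hCI : (C Complex.I : ℂ[X])^2 = -1 := by
      rw [← C_pow, Complex.I_sq, map_neg, C_1]
    have hq : (X - C (c + s * Complex.I)) * (X - C (c - s * Complex.I))
        = (X - C c)^2 + (C s)^2 := by
      simp only [C_add, C_sub, C_mul]
      linear_combination (-(C s)^2) * hCI
    calc ((X - C c)^2 + (C s)^2)^2
        = ((X - C (c + s * Complex.I)) * (X - C (c - s * Complex.I)))^2 := by rw [hq]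
      _ = _ := by ring
  -- Part 3: the eigenspace dimension
  · have hsymp : (b₂ - b₃) * Real.cos θ + (b₁ + b₄) * Real.sin θ = 0 := part1.mp hsp
    clear hsp part1
    have hs : Complex.sin θ ≠ 0 := by rw [← Complex.ofReal_sin]; exact_mod_cast hsn
    set A := ((N2 θ b₁ b₂ b₃ b₄).map (fun x : ℝ => (x : ℂ))
        - Complex.exp (θ * Complex.I) • (1 : Matrix (Fin 4) (Fin 4) ℂ)) with hA
    have hAmat : A = !![-(Complex.sin θ * Complex.I), (b₁:ℂ), -Complex.sin θ, (b₂:ℂ);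
        0, -(Complex.sin θ * Complex.I), 0, -Complex.sin θ;
        Complex.sin θ, (b₃:ℂ), -(Complex.sin θ * Complex.I), (b₄:ℂ);
        0, Complex.sin θ, 0, -(Complex.sin θ * Complex.I)] := by
      ext i j
      fin_cases i <;> fin_cases j <;>
        simp [hA, N2, Matrix.map_apply, Matrix.sub_apply, Matrix.smul_apply, Matrix.one_apply,
          Complex.exp_mul_I] <;> ring
    have mem_iff : ∀ x : Fin 4 → ℂ, x ∈ LinearMap.ker A.mulVecLin ↔
        (-(Complex.sin θ * Complex.I) * x 0 + (b₁:ℂ) * x 1 - Complex.sin θ * x 2 + (b₂:ℂ) * x 3 = 0 ∧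
         -(Complex.sin θ * Complex.I) * x 1 - Complex.sin θ * x 3 = 0 ∧
         Complex.sin θ * x 0 + (b₃:ℂ) * x 1 - Complex.sin θ * Complex.I * x 2 + (b₄:ℂ) * x 3 = 0 ∧
         Complex.sin θ * x 1 - Complex.sin θ * Complex.I * x 3 = 0) := by
      intro x
      rw [LinearMap.mem_ker, Matrix.mulVecLin_apply, hAmat]
      constructor
      · intro hx
        refine ⟨?_, ?_, ?_, ?_⟩ <;> [have := congrFun hx 0; have := congrFun hx 1;
          have := congrFun hx 2; have := congrFun hx 3] <;>
        · simp [Matrix.mulVec, dotProduct, Fin.sum_univ_four] at this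
          linear_combination this
      · rintro ⟨h0, h1, h2, h3⟩
        funext i
        fin_cases i <;>
          simp [Matrix.mulVec, dotProduct, Fin.sum_univ_four] <;>
          [linear_combination h0; linear_combination h1; linear_combination h2;
           linear_combination h3]
    set v₁ : Fin 4 → ℂ := ![1, 0, -Complex.I, 0] with hv₁def
    have hv₁ : v₁ ∈ LinearMap.ker A.mulVecLin := by
      rw [mem_iff]
      refine ⟨?_, ?_, ?_, ?_⟩ <;> simp [hv₁def] <;>
        linear_combination (Complex.sin θ) * Complex.I_mul_I
    constructor
    · -- dim = 1 → b₂ ≠ b₃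
      intro hdim hb23
      have hb : b₂ = b₃ := by linarith [sub_eq_zero.mp hb23]
      have hb14 : b₄ = -b₁ := by
        have : (b₁ + b₄) * Real.sin θ = 0 := by rw [hb] at hsymp; linarith [hsymp]
        rcases mul_eq_zero.mp this with h | h
        · linarith
        · exact absurd h hsn
      set v₂ : Fin 4 → ℂ :=
        ![0, Complex.sin θ * Complex.I, (b₂:ℂ) + (b₁:ℂ) * Complex.I, Complex.sin θ] with hv₂def
      have hv₂ : v₂ ∈ LinearMap.ker A.mulVecLin := by
        rw [mem_iff]
        subst hb hb14
        push_cast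
        refine ⟨by simp [hv₂def]; ring, ?_, ?_, by simp [hv₂def]; ring⟩
        · simp [hv₂def]
          linear_combination (-(Complex.sin (θ:ℂ) ^ 2)) * Complex.I_mul_I
        · simp [hv₂def]
          linear_combination (-(Complex.sin (θ:ℂ)) * (b₁:ℂ)) * Complex.I_mul_I
      have hli : LinearIndependent ℂ ![v₁, v₂] := by
        rw [LinearIndependent.pair_iff]
        intro a b hab
        have h0 := congrFun hab 0
        have h3 := congrFun hab 3
        simp [hv₁def, hv₂def] at h0 h3
        rcases h3 with h3 | h3
        · exact ⟨h0, h3⟩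
        · exact absurd h3 hs
      have hle : Submodule.span ℂ (Set.range ![v₁, v₂]) ≤ LinearMap.ker A.mulVecLin := by
        rw [Submodule.span_le]
        rintro _ ⟨i, rfl⟩
        fin_cases i
        · exact hv₁
        · exact hv₂
      have h2 : (2:ℕ) ≤ Module.finrank ℂ (LinearMap.ker A.mulVecLin) := by
        have := finrank_span_eq_card hli
        simp at this
        calc (2:ℕ) = Module.finrank ℂ (Submodule.span ℂ (Set.range ![v₁, v₂])) := this.symm
          _ ≤ _ := Submodule.finrank_mono hle
      omega
    · -- b₂ ≠ b₃ → dim = 1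
      intro hb
      have hker : LinearMap.ker A.mulVecLin = Submodule.span ℂ {v₁} := by
        apply le_antisymm
        · intro x hx
          rw [mem_iff] at hx
          obtain ⟨h0, h1, h2, h3⟩ := hx
          have hx3 : x 3 = -(Complex.I * x 1) := by
            have h : Complex.sin θ * (x 3 + Complex.I * x 1) = 0 := by linear_combination -h1
            rcases mul_eq_zero.mp h with h | h
            · exact absurd h hs
            · linear_combination h
          have hx1 : x 1 = 0 := by
            have hK : (((b₂:ℂ) - b₃) + ((b₁:ℂ) + b₄) * Complex.I) * x 1 = 0 := by
              rw [hx3] at h0 h2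
              linear_combination Complex.I * h0 - h2 +
                (Complex.sin θ * x 0 + (b₂:ℂ) * x 1) * Complex.I_mul_I
            have hKne : (((b₂:ℂ) - b₃) + ((b₁:ℂ) + b₄) * Complex.I) ≠ 0 := by
              intro h
              apply hb
              have := congrArg Complex.re h
              simp at this
              linarith
            rcases mul_eq_zero.mp hK with h | h
            · exact absurd h hKne
            · exact h
          have hx3' : x 3 = 0 := by rw [hx3, hx1, mul_zero, neg_zero]
          have hx2 : x 2 = -(Complex.I * x 0) := by
            rw [hx1, hx3'] at h0
            have h : Complex.sin θ * (x 2 + Complex.I * x 0) = 0 := by linear_combination -h0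
            rcases mul_eq_zero.mp h with h | h
            · exact absurd h hs
            · linear_combination h
          rw [Submodule.mem_span_singleton]
          refine ⟨x 0, ?_⟩
          funext i
          fin_cases i <;> simp [hv₁def, hx1, hx2, hx3'] <;> ring
        · rw [Submodule.span_le, Set.singleton_subset_iff]
          exact hv₁
      rw [hker]
      apply finrank_span_singleton
      intro h
      have := congrFun h 0
      simp [hv₁def] at this
end
end

section
/- Let θ ∈ (0,2π)\{π}, b ∈ ℝ⁴ with N := N₂(θ,b) ∈ Sp(4), and define N_α = N · diag(R(α),R(α)). Then the Sp(4)-discriminant satisfies Δ(N_α) = 8(b₂−b₃) sinθ cosα sinα + [16 sin²θ + (b₁−b₄)² + 4b₂b₃] sin²α. Consequently, if (b₂−b₃)sinθ < 0 (the non-trivial case), there exists α₀ > 0 such that Δ(N_α) < 0 for α ∈ (0,α₀) and Δ(N_α) > 0 for α ∈ (−α₀,0); if (b₂−b₃)sinθ > 0 the signs are reversed. -/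
/-!
For a 4×4 matrix, `2σ₂ = tr² − tr(M²)` (sum of the principal 2×2 minors), so
`Δ(M) = 2 tr(M²) − tr(M)² + 8`. For `M = N₂(θ,b)·diag(R(α),R(α))` this is a trigonometric
polynomial that factors as `sin α · g(α)` with `g(0) = 8(b₂−b₃) sin θ`. Near `α = 0`, `g`
keeps the sign of `g(0)` by continuity while `sin α` has the sign of `α`.
-/

open Matrix Set Polynomial

noncomputable section

/-- The block rotation `diag(R(α), R(α)) ∈ Sp(4)`. -/
def Rd (α : ℝ) : Matrix (Fin 4) (Fin 4) ℝ :=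
  !![Real.cos α, -Real.sin α, 0, 0;
     Real.sin α, Real.cos α, 0, 0;
     0, 0, Real.cos α, -Real.sin α;
     0, 0, Real.sin α, Real.cos α]

/-- `σ₂(M)`: the second elementary symmetric function of the eigenvalues of a 4×4
matrix, i.e. the degree-2 coefficient of its characteristic polynomial. -/
def sigma2 (M : Matrix (Fin 4) (Fin 4) ℝ) : ℝ := M.charpoly.coeff 2

/-- The discriminant `Δ(M) = σ₁(M)² − 4σ₂(M) + 8` for `M ∈ Sp(4)`. -/
def Delta4 (M : Matrix (Fin 4) (Fin 4) ℝ) : ℝ :=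
  (Matrix.trace M)^2 - 4 * sigma2 M + 8

lemma det_submatrix_pair {n R : Type*} [DecidableEq n] [CommRing R] (M : Matrix n n R)
    {i j : n} (hij : i ≠ j) :
    (M.submatrix (Subtype.val : ({i, j} : Finset n) → n) Subtype.val).det
      = M i i * M j j - M i j * M j i := by
  let e : Fin 2 ≃ ({i, j} : Finset n) :=
    { toFun := ![⟨i, by simp⟩, ⟨j, by simp⟩]
      invFun := fun k => if k.1 = i then 0 else 1
      left_inv := by intro k; fin_cases k <;> simp [hij.symm]
      right_inv := by
        rintro ⟨k, hk⟩
        rcases Finset.mem_insert.1 hk with rfl | hk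
        · simp
        · rw [Finset.mem_singleton] at hk; subst hk; simp [hij.symm] }
  rw [← det_submatrix_equiv_self e, submatrix_submatrix, det_fin_two]
  simp [e]

lemma two_mul_charpoly_coeff_two_fin_four {R : Type*} [CommRing R]
    (M : Matrix (Fin 4) (Fin 4) R) :
    2 * M.charpoly.coeff 2 = M.trace ^ 2 - (M * M).trace := by
  have hminors := charpoly_coeff_eq_sum_minors M 2 (by simp)
  have hpairs : (Finset.univ : Finset (Fin 4)).powersetCard 2
      = {{0, 1}, {0, 2}, {0, 3}, {1, 2}, {1, 3}, {2, 3}} := by decide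
  simp only [Fintype.card_fin, Nat.reduceSub, hpairs] at hminors
  rw [hminors, Finset.sum_insert (by decide), Finset.sum_insert (by decide),
    Finset.sum_insert (by decide), Finset.sum_insert (by decide), Finset.sum_insert (by decide),
    Finset.sum_singleton, det_submatrix_pair M (by decide), det_submatrix_pair M (by decide),
    det_submatrix_pair M (by decide), det_submatrix_pair M (by decide),
    det_submatrix_pair M (by decide), det_submatrix_pair M (by decide)]
  simp only [trace, diag, mul_apply, Fin.sum_univ_four]
  ring

lemma Delta4_eq_two_mul_trace_sq (M : Matrix (Fin 4) (Fin 4) ℝ) :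
    Delta4 M = 2 * (M * M).trace - M.trace ^ 2 + 8 := by
  rw [Delta4, sigma2]
  linear_combination (-2) * two_mul_charpoly_coeff_two_fin_four M

lemma Delta4_N2_mul_Rd (θ b₁ b₂ b₃ b₄ α : ℝ) :
    Delta4 (N2 θ b₁ b₂ b₃ b₄ * Rd α) =
      Real.sin α * (8 * ((b₂ - b₃) * Real.sin θ) * Real.cos α
        + (16 * Real.sin θ ^ 2 + (b₁ - b₄) ^ 2 + 4 * b₂ * b₃) * Real.sin α) := by
  rw [Delta4_eq_two_mul_trace_sq]
  simp only [N2, Rd, trace, diag_apply, mul_apply, Fin.sum_univ_four, of_apply, cons_val',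
    cons_val_fin_one, cons_val_zero, cons_val_one, cons_val]
  linear_combination (-8 * Real.sin α ^ 2 - 8 * Real.cos α ^ 2) * Real.cos_sq_add_sin_sq θ
    - 8 * Real.cos_sq_add_sin_sq α

lemma exists_sign_sin_mul_of_neg {g : ℝ → ℝ} (hg : ContinuousAt g 0) (hg0 : g 0 < 0) :
    ∃ α₀ > (0 : ℝ), ∀ α : ℝ,
      (α ∈ Ioo 0 α₀ → Real.sin α * g α < 0) ∧
      (α ∈ Ioo (-α₀) 0 → 0 < Real.sin α * g α) := by
  obtain ⟨ε, hε, hneg⟩ := Metric.eventually_nhds_iff.1 (hg.eventually (gt_mem_nhds hg0))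
  have hg_neg : ∀ α, |α| < ε → g α < 0 := fun α h => hneg (by simpa [Real.dist_eq] using h)
  refine ⟨min ε Real.pi, lt_min hε Real.pi_pos, fun α => ⟨?_, ?_⟩⟩
  · rintro ⟨h0, hα⟩
    exact mul_neg_of_pos_of_neg
      (Real.sin_pos_of_pos_of_lt_pi h0 (hα.trans_le (min_le_right _ _)))
      (hg_neg α (by rw [abs_of_pos h0]; exact hα.trans_le (min_le_left _ _)))
  · rintro ⟨hα, h0⟩
    exact mul_pos_of_neg_of_neg
      (Real.sin_neg_of_neg_of_neg_pi_lt h0 (by linarith [min_le_right ε Real.pi]))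
      (hg_neg α (by rw [abs_of_neg h0]; linarith [min_le_left ε Real.pi]))

theorem N2_perturbation_discriminant_general (θ b₁ b₂ b₃ b₄ : ℝ) :
    (∀ α : ℝ, Delta4 (N2 θ b₁ b₂ b₃ b₄ * Rd α) =
      8 * (b₂ - b₃) * Real.sin θ * Real.cos α * Real.sin α
        + (16 * Real.sin θ ^ 2 + (b₁ - b₄)^2 + 4 * b₂ * b₃) * Real.sin α ^ 2) ∧
    ((b₂ - b₃) * Real.sin θ < 0 →
      ∃ α₀ > (0:ℝ), ∀ α : ℝ,
        (α ∈ Ioo (0:ℝ) α₀ → Delta4 (N2 θ b₁ b₂ b₃ b₄ * Rd α) < 0) ∧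
        (α ∈ Ioo (-α₀) (0:ℝ) → 0 < Delta4 (N2 θ b₁ b₂ b₃ b₄ * Rd α))) ∧
    ((b₂ - b₃) * Real.sin θ > 0 →
      ∃ α₀ > (0:ℝ), ∀ α : ℝ,
        (α ∈ Ioo (0:ℝ) α₀ → 0 < Delta4 (N2 θ b₁ b₂ b₃ b₄ * Rd α)) ∧
        (α ∈ Ioo (-α₀) (0:ℝ) → Delta4 (N2 θ b₁ b₂ b₃ b₄ * Rd α) < 0)) := by
  set K := (b₂ - b₃) * Real.sin θ
  set g : ℝ → ℝ := fun α =>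
    8 * K * Real.cos α + (16 * Real.sin θ ^ 2 + (b₁ - b₄) ^ 2 + 4 * b₂ * b₃) * Real.sin α
  have hg : Continuous g := by fun_prop
  have hg0 : g 0 = 8 * K := by simp [g]
  have hΔ : ∀ α, Delta4 (N2 θ b₁ b₂ b₃ b₄ * Rd α) = Real.sin α * g α :=
    Delta4_N2_mul_Rd θ b₁ b₂ b₃ b₄
  refine ⟨fun α => by rw [hΔ]; ring, fun hK => ?_, fun hK => ?_⟩
  · simpa only [hΔ] using exists_sign_sin_mul_of_neg hg.continuousAt (by linarith)
  · obtain ⟨α₀, hα₀, h⟩ := exists_sign_sin_mul_of_neg (g := -g) hg.neg.continuousAt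
      (by simp only [Pi.neg_apply]; linarith)
    refine ⟨α₀, hα₀, fun α => ?_⟩
    simp only [hΔ, Pi.neg_apply, mul_neg, neg_neg_iff_pos, neg_pos] at h ⊢
    exact h α

/-- The discriminant of `N_α = N₂(θ,b)·diag(R(α),R(α))` equals
`8(b₂−b₃)sinθ cosα sinα + [16sin²θ + (b₁−b₄)² + 4b₂b₃] sin²α`, with the stated sign
behaviour near `α = 0` in the non-trivial and trivial cases. -/
theorem N2_perturbation_discriminant (θ b₁ b₂ b₃ b₄ : ℝ)
    (hθ : θ ∈ Ioo (0:ℝ) (2 * Real.pi)) (hθπ : θ ≠ Real.pi)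
    (hsp : (N2 θ b₁ b₂ b₃ b₄)ᵀ * J4 * N2 θ b₁ b₂ b₃ b₄ = J4) :
    (∀ α : ℝ, Delta4 (N2 θ b₁ b₂ b₃ b₄ * Rd α) =
      8 * (b₂ - b₃) * Real.sin θ * Real.cos α * Real.sin α
        + (16 * Real.sin θ ^ 2 + (b₁ - b₄)^2 + 4 * b₂ * b₃) * Real.sin α ^ 2) ∧
    ((b₂ - b₃) * Real.sin θ < 0 →
      ∃ α₀ > (0:ℝ), ∀ α : ℝ,
        (α ∈ Ioo (0:ℝ) α₀ → Delta4 (N2 θ b₁ b₂ b₃ b₄ * Rd α) < 0) ∧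
        (α ∈ Ioo (-α₀) (0:ℝ) → 0 < Delta4 (N2 θ b₁ b₂ b₃ b₄ * Rd α))) ∧
    ((b₂ - b₃) * Real.sin θ > 0 →
      ∃ α₀ > (0:ℝ), ∀ α : ℝ,
        (α ∈ Ioo (0:ℝ) α₀ → 0 < Delta4 (N2 θ b₁ b₂ b₃ b₄ * Rd α)) ∧
        (α ∈ Ioo (-α₀) (0:ℝ) → Delta4 (N2 θ b₁ b₂ b₃ b₄ * Rd α) < 0)) :=
  N2_perturbation_discriminant_general θ b₁ b₂ b₃ b₄
end
end

section
/- For c = (c₁,c₂) ∈ ℝ² with c₂ < 0, let M⁺_α = M₂(1,c) · diag(R(α),R(α)), where M₂(1,c) is the 4×4 matrix with rows (1, c₁, 1, 0), (0, 1, 0, 0), (0, c₂, 1, −c₂), (0, −1, 0, 1). Then Δ(M⁺_α) = 4c₂ cosα sinα + [(c₁+c₂)² + 4] sin²α. Hence there exists α₀ > 0 such that Δ(M⁺_α) < 0 for α ∈ (0,α₀) and Δ(M⁺_α) > 0 for α ∈ (−α₀,0). -/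
open Matrix Set Polynomial

noncomputable section

/-- The normal form `M₂(1, c)`. -/
def M2one (c₁ c₂ : ℝ) : Matrix (Fin 4) (Fin 4) ℝ :=
  !![1, c₁, 1, 0;
     0, 1, 0, 0;
     0, c₂, 1, -c₂;
     0, -1, 0, 1]

lemma evalCharpoly (M : Matrix (Fin 4) (Fin 4) ℝ) (t : ℝ) :
    M.charpoly.eval t = (t • (1 : Matrix (Fin 4) (Fin 4) ℝ) - M).det := by
  rw [Matrix.charpoly, ← Polynomial.coe_evalRingHom, RingHom.map_det]
  congr 1
  ext i j
  by_cases h : i = j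
  · subst h; simp [charmatrix_apply_eq, Matrix.one_apply]
  · simp [charmatrix_apply_ne _ _ _ h, Matrix.one_apply_ne h]

lemma coeff2_formula (M : Matrix (Fin 4) (Fin 4) ℝ) :
    M.charpoly.coeff 2 =
      (M.charpoly.eval 1 + M.charpoly.eval (-1)) / 2 - M.charpoly.eval 0 - 1 := by
  have hdeg : M.charpoly.natDegree = 4 := by
    simp [Matrix.charpoly_natDegree_eq_dim]
  have h4 : M.charpoly.coeff 4 = 1 := by
    have := M.charpoly_monic.leadingCoeff
    rwa [Polynomial.leadingCoeff, hdeg] at this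
  have he : ∀ t : ℝ, M.charpoly.eval t =
      ∑ i ∈ Finset.range 5, M.charpoly.coeff i * t ^ i := by
    intro t
    rw [Polynomial.eval_eq_sum_range, hdeg]
  rw [he 1, he (-1), he 0]
  simp [Finset.sum_range_succ, h4]
  ring

set_option maxHeartbeats 1000000 in
lemma det_fin_four' (M : Matrix (Fin 4) (Fin 4) ℝ) :
    M.det =
      M 0 0 * (M 1 1 * (M 2 2 * M 3 3 - M 2 3 * M 3 2)
              - M 1 2 * (M 2 1 * M 3 3 - M 2 3 * M 3 1)
              + M 1 3 * (M 2 1 * M 3 2 - M 2 2 * M 3 1))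
    - M 0 1 * (M 1 0 * (M 2 2 * M 3 3 - M 2 3 * M 3 2)
              - M 1 2 * (M 2 0 * M 3 3 - M 2 3 * M 3 0)
              + M 1 3 * (M 2 0 * M 3 2 - M 2 2 * M 3 0))
    + M 0 2 * (M 1 0 * (M 2 1 * M 3 3 - M 2 3 * M 3 1)
              - M 1 1 * (M 2 0 * M 3 3 - M 2 3 * M 3 0)
              + M 1 3 * (M 2 0 * M 3 1 - M 2 1 * M 3 0))
    - M 0 3 * (M 1 0 * (M 2 1 * M 3 2 - M 2 2 * M 3 1)
              - M 1 1 * (M 2 0 * M 3 2 - M 2 2 * M 3 0)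
              + M 1 2 * (M 2 0 * M 3 1 - M 2 1 * M 3 0)) := by
  rw [Matrix.det_succ_row_zero, Fin.sum_univ_four]
  simp [Matrix.det_fin_three, Matrix.submatrix_apply, Fin.succAbove, Fin.lt_def,
    show (Fin.succ 2 : Fin 4) = 3 from rfl, show (Fin.castSucc 2 : Fin 4) = 2 from rfl,
    show ((3:Fin 4):ℕ) = 3 from rfl, show ((2:Fin 4):ℕ) = 2 from rfl,
    show ((1:Fin 4):ℕ) = 1 from rfl, show ((0:Fin 4):ℕ) = 0 from rfl]
  norm_num
  ring

lemma one_fin_four : (1 : Matrix (Fin 4) (Fin 4) ℝ) =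
    !![1,0,0,0; 0,1,0,0; 0,0,1,0; 0,0,0,1] := by
  ext i j; fin_cases i <;> fin_cases j <;> rfl

set_option maxHeartbeats 4000000 in
lemma delta_eq (c₁ c₂ α : ℝ) :
    Delta4 (M2one c₁ c₂ * Rd α) =
      4 * c₂ * Real.cos α * Real.sin α + ((c₁ + c₂)^2 + 4) * Real.sin α ^ 2 := by
  unfold Delta4 sigma2
  rw [coeff2_formula, evalCharpoly, evalCharpoly, evalCharpoly]
  rw [det_fin_four', det_fin_four', det_fin_four', one_fin_four]
  simp only [M2one, Rd, Matrix.mul_apply, Fin.sum_univ_four, Matrix.trace, Matrix.diag,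
    Matrix.sub_apply, Matrix.smul_apply, Fin.sum_univ_four,
    Matrix.cons_val', Matrix.cons_val_zero, Matrix.cons_val_one, Matrix.head_cons,
    Matrix.empty_val', Matrix.cons_val_fin_one, Matrix.head_fin_const,
    Matrix.cons_val_two, Matrix.cons_val_three, Matrix.tail_cons, Matrix.of_apply,
    smul_eq_mul, Fin.isValue]
  norm_num
  linear_combination (-8 : ℝ) * Real.sin_sq_add_cos_sq α

/-- For `c₂ < 0`: the discriminant of `M⁺_α = M₂(1,c)·diag(R(α),R(α))` equals
`4c₂cosα sinα + [(c₁+c₂)² + 4] sin²α`, hence is negative for small positive `α` and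
positive for small negative `α`. -/
theorem M2one_perturbation_discriminant (c₁ c₂ : ℝ) (hc₂ : c₂ < 0) :
    (∀ α : ℝ, Delta4 (M2one c₁ c₂ * Rd α) =
      4 * c₂ * Real.cos α * Real.sin α + ((c₁ + c₂)^2 + 4) * Real.sin α ^ 2) ∧
    ∃ α₀ > (0:ℝ), ∀ α : ℝ,
      (α ∈ Ioo (0:ℝ) α₀ → Delta4 (M2one c₁ c₂ * Rd α) < 0) ∧
      (α ∈ Ioo (-α₀) (0:ℝ) → 0 < Delta4 (M2one c₁ c₂ * Rd α)) := by
  refine ⟨fun α => delta_eq c₁ c₂ α, ?_⟩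
  set K : ℝ := (c₁ + c₂)^2 + 4 with hK
  have hKpos : 0 < K := by positivity
  have hcos1 : 0 < Real.cos 1 := Real.cos_one_pos
  have hpi : (3:ℝ) < Real.pi := Real.pi_gt_three
  set α₀ : ℝ := min 1 ((-4 * c₂ * Real.cos 1) / K) with hα₀
  have hα₀pos : 0 < α₀ := by
    apply lt_min one_pos
    apply div_pos _ hKpos
    nlinarith
  have hα₀le1 : α₀ ≤ 1 := min_le_left _ _
  have hα₀le : α₀ ≤ (-4 * c₂ * Real.cos 1) / K := min_le_right _ _
  refine ⟨α₀, hα₀pos, fun α => ⟨?_, ?_⟩⟩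
  · rintro ⟨h0, h1⟩
    rw [delta_eq]
    have hαle1 : α < 1 := lt_of_lt_of_le h1 hα₀le1
    have hsin : 0 < Real.sin α :=
      Real.sin_pos_of_pos_of_lt_pi h0 (by linarith)
    have hcos : Real.cos 1 ≤ Real.cos α := by
      apply Real.cos_le_cos_of_nonneg_of_le_pi (le_of_lt h0) (by linarith) (le_of_lt hαle1)
    have hsinle : Real.sin α ≤ α := Real.sin_le (le_of_lt h0)
    have hbound : K * α₀ ≤ -4 * c₂ * Real.cos 1 := by
      rw [mul_comm]
      exact (le_div_iff₀ hKpos).mp hα₀le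
    have hbr : 4 * c₂ * Real.cos α + K * Real.sin α < 0 := by
      have h1' : 4 * c₂ * Real.cos α ≤ 4 * c₂ * Real.cos 1 := by nlinarith
      have h2' : K * Real.sin α < K * α₀ := by
        apply mul_lt_mul_of_pos_left _ hKpos
        exact lt_of_le_of_lt hsinle h1
      linarith
    nlinarith
  · rintro ⟨h0, h1⟩
    rw [delta_eq]
    have hαgt : -1 < α := by
      have : -α₀ ≥ -1 := by linarith
      linarith
    have hsin : Real.sin α < 0 := by
      apply Real.sin_neg_of_neg_of_neg_pi_lt h1
      linarith
    have hcos : 0 < Real.cos α := by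
      apply Real.cos_pos_of_mem_Ioo
      constructor <;> [nlinarith; nlinarith]
    have hbr : 4 * c₂ * Real.cos α + K * Real.sin α < 0 := by
      nlinarith
    nlinarith

end
end

section
/- There is no positive path entirely contained in the truly hyperbolic subset of Sp(2) joining D(1/2) = diag(1/2, 2) to D(2) = diag(2, 1/2). That is, if γ : [0,1] → Sp(2) is a positive path with γ(0) = diag(1/2,2) and γ(1) = diag(2,1/2), then there exists t ∈ [0,1] such that γ(t) has an eigenvalue on the unit circle. -/
/-!
Write `γ(t) = [[a, b], [c, d]]`. Positivity gives `c' = P₀₀ a + P₀₁ c`, so `c' = P₀₀ a` at a zero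
of `c`, and `P₀₀ > 0`. Since `c` vanishes at both ends, it cannot cross zero only upwards, so at
some zero of `c` we have `a ≤ 0`; there `a d = det γ = 1` forces `tr γ ≤ -2`. The trace starts at
`5/2`, so by the intermediate value theorem it passes through `2`, and a matrix of `SL(2)` with
trace `2` has eigenvalue `1`.
-/

open Matrix Set Filter Topology

noncomputable section

lemma HasDerivAt.nonpos_of_nonneg_of_eq_zero {f : ℝ → ℝ} {f' a b : ℝ} (hab : a < b)
    (hd : HasDerivAt f f' b) (hf : ∀ x ∈ Ioo a b, 0 ≤ f x) (hb : f b = 0) : f' ≤ 0 := by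
  have hslope : Tendsto (slope f b) (𝓝[<] b) (𝓝 f') :=
    (hasDerivAt_iff_tendsto_slope.1 hd).mono_left (nhdsLT_le_nhdsNE b)
  refine le_of_tendsto hslope ?_
  filter_upwards [Ioo_mem_nhdsLT hab] with x hx
  rw [slope_def_field, hb, sub_zero]
  exact div_nonpos_of_nonneg_of_nonpos (hf x hx) (by linarith [hx.2])

theorem exists_eq_zero_and_deriv_nonpos {f f' : ℝ → ℝ} {a b : ℝ} (hab : a < b)
    (hd : ∀ x ∈ Icc a b, HasDerivAt f (f' x) x) (ha : 0 ≤ f a) (hb : f b = 0) :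
    ∃ x ∈ Icc a b, f x = 0 ∧ f' x ≤ 0 := by
  by_contra! hcross
  -- `f` can only cross zero upwards, so it never leaves `[0, ∞)`.
  have hnonneg : ∀ x ∈ Icc a b, 0 ≤ f x := by
    have := image_le_of_deriv_right_lt_deriv_boundary (f := -f) (f' := -f') (B := 0) (B' := 0)
      (fun x hx => (hd x hx).neg.continuousAt.continuousWithinAt)
      (fun x hx => (hd x (Ico_subset_Icc_self hx)).neg.hasDerivWithinAt) (by simpa using ha)
      (fun _ => hasDerivAt_const _ _)
      (fun x hx hx0 => by simpa using hcross x (Ico_subset_Icc_self hx) (by simpa using hx0))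
    simpa using this
  exact (hcross b (right_mem_Icc.2 hab.le) hb).not_ge <|
    (hd b (right_mem_Icc.2 hab.le)).nonpos_of_nonneg_of_eq_zero hab
      (fun x hx => hnonneg x (Ioo_subset_Icc_self hx)) hb

lemma J2_mul_mul_apply_one_zero (P M : Matrix (Fin 2) (Fin 2) ℝ) :
    (J2 * P * M) 1 0 = P 0 0 * M 0 0 + P 0 1 * M 1 0 := by
  simp [J2, Matrix.mul_apply, Fin.sum_univ_two, vecMul, dotProduct]

lemma Matrix.trace_le_neg_two_of_det_eq_one {M : Matrix (Fin 2) (Fin 2) ℝ} (hdet : M.det = 1)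
    (h10 : M 1 0 = 0) (h00 : M 0 0 ≤ 0) : M.trace ≤ -2 := by
  rw [det_fin_two, h10, mul_zero, sub_zero] at hdet
  have h00' : M 0 0 < 0 := h00.lt_of_ne (by rintro h; simp [h] at hdet)
  rw [trace_fin_two]
  nlinarith [sq_nonneg (M 0 0 + 1)]

lemma Matrix.det_sub_one_fin_two {R : Type*} [CommRing R] (M : Matrix (Fin 2) (Fin 2) R) :
    (M - 1).det = M.det - M.trace + 1 := by
  simp only [det_fin_two, trace_fin_two, sub_apply, one_apply_eq, ne_eq, zero_ne_one, one_ne_zero,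
    not_false_eq_true, one_apply_ne, sub_zero]
  ring

lemma Matrix.exists_mulVec_eq_self_of_det_eq_one_of_trace_eq_two {R : Type*} [CommRing R]
    [IsDomain R] {M : Matrix (Fin 2) (Fin 2) R} (hdet : M.det = 1) (htr : M.trace = 2) :
    ∃ v ≠ 0, M *ᵥ v = v := by
  obtain ⟨v, hv, hMv⟩ := exists_mulVec_eq_zero_iff.2 <| by
    rw [M.det_sub_one_fin_two, hdet, htr]; norm_num
  exact ⟨v, hv, by rwa [sub_mulVec, one_mulVec, sub_eq_zero] at hMv⟩

theorem no_truly_hyperbolic_positive_path_sp2_general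
    (γ P : ℝ → Matrix (Fin 2) (Fin 2) ℝ)
    (h0 : γ 0 = !![(1:ℝ)/2, 0; 0, 2]) (h1 : γ 1 = !![(2:ℝ), 0; 0, 1/2])
    (hdet : ∀ t ∈ Icc (0:ℝ) 1, (γ t).det = 1)
    (hP : ∀ t ∈ Icc (0:ℝ) 1, (P t)ᵀ = P t ∧ (P t).PosDef)
    (hd : ∀ t ∈ Icc (0:ℝ) 1, ∀ i j,
      HasDerivAt (fun s => γ s i j) ((J2 * P t * γ t) i j) t) :
    ∃ t ∈ Icc (0:ℝ) 1, ∃ z : ℂ, ‖z‖ = 1 ∧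
      ∃ v : Fin 2 → ℂ, v ≠ 0 ∧ ((γ t).map (fun x : ℝ => (x : ℂ))) *ᵥ v = z • v := by
  obtain ⟨t₀, ht₀, hc, hc'⟩ := exists_eq_zero_and_deriv_nonpos zero_lt_one
    (fun t ht => hd t ht 1 0) (by simp [h0]) (by simp [h1])
  rw [J2_mul_mul_apply_one_zero, hc, mul_zero, add_zero] at hc'
  have ha : γ t₀ 0 0 ≤ 0 := nonpos_of_mul_nonpos_right hc' ((hP t₀ ht₀).2.diag_pos)
  have htr_cont : ContinuousOn (fun t => (γ t).trace) (Icc 0 t₀) := fun t ht => by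
    have ht' : t ∈ Icc (0:ℝ) 1 := ⟨ht.1, ht.2.trans ht₀.2⟩
    simp only [trace_fin_two]
    exact ((hd t ht' 0 0).continuousAt.add (hd t ht' 1 1).continuousAt).continuousWithinAt
  obtain ⟨s, hs, htr : (γ s).trace = 2⟩ : (2:ℝ) ∈ (fun t => (γ t).trace) '' Icc 0 t₀ :=
    intermediate_value_Icc' ht₀.1 htr_cont
      ⟨(trace_le_neg_two_of_det_eq_one (hdet t₀ ht₀) hc ha).trans (by norm_num),
        by simp [h0, trace_fin_two]⟩
  have hs' : s ∈ Icc (0:ℝ) 1 := ⟨hs.1, hs.2.trans ht₀.2⟩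
  have hdet_s := hdet s hs'
  rw [det_fin_two] at hdet_s
  rw [trace_fin_two] at htr
  obtain ⟨v, hv, hγv⟩ :=
    exists_mulVec_eq_self_of_det_eq_one_of_trace_eq_two (M := (γ s).map (fun x : ℝ => (x : ℂ)))
      (by rw [det_fin_two]; simp only [map_apply]; exact_mod_cast hdet_s)
      (by rw [trace_fin_two]; simp only [map_apply]; exact_mod_cast htr)
  exact ⟨s, hs', 1, by simp, v, hv, by rw [hγv, one_smul]⟩

/-- There is no positive path inside the truly hyperbolic part of `Sp(2)` from
`diag(1/2, 2)` to `diag(2, 1/2)`: any positive path in `Sp(2)` between these two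
matrices has, at some time `t ∈ [0,1]`, an eigenvalue on the unit circle. -/
theorem no_truly_hyperbolic_positive_path_sp2
    (γ P : ℝ → Matrix (Fin 2) (Fin 2) ℝ)
    (h0 : γ 0 = !![(1:ℝ)/2, 0; 0, 2]) (h1 : γ 1 = !![(2:ℝ), 0; 0, 1/2])
    (hdet : ∀ t ∈ Icc (0:ℝ) 1, (γ t).det = 1)
    (hPc : ∀ i j, ContinuousOn (fun t => P t i j) (Icc (0:ℝ) 1))
    (hP : ∀ t ∈ Icc (0:ℝ) 1, (P t)ᵀ = P t ∧ (P t).PosDef)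
    (hd : ∀ t ∈ Icc (0:ℝ) 1, ∀ i j,
      HasDerivAt (fun s => γ s i j) ((J2 * P t * γ t) i j) t) :
    ∃ t ∈ Icc (0:ℝ) 1, ∃ z : ℂ, ‖z‖ = 1 ∧
      ∃ v : Fin 2 → ℂ, v ≠ 0 ∧ ((γ t).map (fun x : ℝ => (x : ℂ))) *ᵥ v = z • v :=
  no_truly_hyperbolic_positive_path_sp2_general γ P h0 h1 hdet hP hd
end
end

section
/- Let A ∈ Sp(2n) be truly hyperbolic (no eigenvalue on the unit circle). Then for every symmetric matrix Q there exists a symmetric matrix Y such that Q + (A⁻ᵀYA⁻¹ − Y) is positive definite. Equivalently, the projection to the conjugacy-class space maps the positive cone P_A = {JPA : P symmetric positive definite} ⊂ T_A Sp(2n) onto the full tangent space of Conj(Sp(2n)) at [A]. -/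
open Matrix Set

noncomputable section

/-- `A` is truly hyperbolic: no eigenvalue on the unit circle. -/
def TrulyHyperbolic {n : ℕ} (A : Matrix (Fin 2 × Fin n) (Fin 2 × Fin n) ℝ) : Prop :=
  ∀ z : ℂ, ‖z‖ = 1 →
    ∀ v : Fin 2 × Fin n → ℂ, (A.map (fun x : ℝ => (x : ℂ))) *ᵥ v = z • v → v = 0

/-!
Instead of the symplectic normal form, we argue by duality. If no value of the Stein operator
`Y ↦ AᵀYA - Y` had a positive quadratic form, Hahn–Banach would separate its range from the open
cone of such matrices by a functional `P ↦ tr(XP)`; the symmetrisation of `-X` is then a nonzero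
positive semidefinite `S` with `ASAᵀ = S`. The range of `S` is `A`-invariant and `A` preserves the
form that `S` induces on it, so `A` has an eigenvalue on the unit circle.
Conjugating by `A⁻¹` turns `AᵀYA - Y` into `A⁻ᵀ(-Y)A⁻¹ + Y`, and since positive definiteness is an
open condition, a large multiple of the latter absorbs any symmetric `Q`.
-/

open scoped ComplexOrder

theorem geometric_hahn_banach_open_submodule {E : Type*} [TopologicalSpace E] [AddCommGroup E]
    [Module ℝ E] [IsTopologicalAddGroup E] [ContinuousSMul ℝ E] {s : Set E} {p : Submodule ℝ E}
    (hs₁ : Convex ℝ s) (hs₂ : IsOpen s) (disj : Disjoint s p) :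
    ∃ f : StrongDual ℝ E, (∀ x ∈ p, f x = 0) ∧ ∀ a ∈ s, f a < 0 := by
  obtain ⟨f, u, hs, hp⟩ := geometric_hahn_banach_open hs₁ hs₂ p.convex disj
  have hu : u ≤ 0 := by simpa using hp 0 p.zero_mem
  refine ⟨f, fun x hx => ?_, fun a ha => (hs a ha).trans_le hu⟩
  by_contra hfx
  have := hp (((u - 1) / f x) • x) (p.smul_mem _ hx)
  rw [map_smul, smul_eq_mul, div_mul_cancel₀ _ hfx] at this
  linarith

namespace Matrix

variable {ι : Type*} [Fintype ι]

/-- Unlike `PosDef`, membership does not require symmetry, so this cone is open in the space of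
all matrices. -/
def posFormCone (ι : Type*) [Fintype ι] : Set (Matrix ι ι ℝ) :=
  {P | ∀ v : ι → ℝ, v ≠ 0 → 0 < v ⬝ᵥ (P *ᵥ v)}

lemma smul_mem_posFormCone {P : Matrix ι ι ℝ} (hP : P ∈ posFormCone ι) {t : ℝ} (ht : 0 < t) :
    t • P ∈ posFormCone ι := fun v hv => by
  simpa [smul_mulVec, dotProduct_smul] using mul_pos ht (hP v hv)

lemma convex_posFormCone : Convex ℝ (posFormCone ι) := by
  intro P hP P' hP' a b ha hb hab v hv
  simp only [add_mulVec, smul_mulVec, dotProduct_add, dotProduct_smul, smul_eq_mul]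
  rcases ha.eq_or_lt with rfl | ha
  · simp only [zero_add] at hab
    simpa [hab] using hP' v hv
  · exact add_pos_of_pos_of_nonneg (mul_pos ha (hP v hv)) (mul_nonneg hb (hP' v hv).le)

lemma mem_posFormCone_iff_sphere {P : Matrix ι ι ℝ} :
    P ∈ posFormCone ι ↔ ∀ v ∈ Metric.sphere (0 : ι → ℝ) 1, 0 < v ⬝ᵥ (P *ᵥ v) := by
  refine ⟨fun hP v hv => hP v (ne_zero_of_mem_unit_sphere ⟨v, hv⟩), fun hP v hv => ?_⟩
  have hnorm : 0 < ‖v‖ := norm_pos_iff.mpr hv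
  have hinv : 0 < ‖v‖⁻¹ := inv_pos.mpr hnorm
  have := hP (‖v‖⁻¹ • v) (by simp [norm_smul, hnorm.ne'])
  simp only [mulVec_smul, dotProduct_smul, smul_dotProduct, smul_eq_mul] at this
  exact (mul_pos_iff_of_pos_left hinv).mp ((mul_pos_iff_of_pos_left hinv).mp this)

lemma isOpen_posFormCone : IsOpen (posFormCone ι) := by
  simp_rw [isOpen_iff_eventually, mem_posFormCone_iff_sphere]
  intro P hP
  refine (isCompact_sphere (0 : ι → ℝ) 1).eventually_forall_of_forall_eventually fun v hv => ?_
  have hcont : Continuous fun z : Matrix ι ι ℝ × (ι → ℝ) => z.2 ⬝ᵥ (z.1 *ᵥ z.2) := by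
    fun_prop
  exact hcont.continuousAt.eventually (lt_mem_nhds (hP v hv))

lemma IsHermitian.posDef_iff_mem_posFormCone {P : Matrix ι ι ℝ} (hP : P.IsHermitian) :
    P.PosDef ↔ P ∈ posFormCone ι := by
  simp only [posDef_iff_dotProduct_mulVec, hP, true_and, star_trivial]
  rfl

lemma PosDef.mem_posFormCone {P : Matrix ι ι ℝ} (hP : P.PosDef) : P ∈ posFormCone ι :=
  hP.isHermitian.posDef_iff_mem_posFormCone.mp hP

lemma dotProduct_transpose_mulVec_self (P : Matrix ι ι ℝ) (v : ι → ℝ) :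
    v ⬝ᵥ (Pᵀ *ᵥ v) = v ⬝ᵥ (P *ᵥ v) := by
  rw [dotProduct_mulVec, vecMul_transpose, dotProduct_comm]

lemma posDef_add_transpose_of_mem_posFormCone {P : Matrix ι ι ℝ} (hP : P ∈ posFormCone ι) :
    (P + Pᵀ).PosDef := by
  have hsymm : (P + Pᵀ).IsHermitian := by
    simp [IsHermitian, conjTranspose_eq_transpose_of_trivial, add_comm]
  refine hsymm.posDef_iff_mem_posFormCone.mpr fun v hv => ?_
  rw [add_mulVec, dotProduct_add, dotProduct_transpose_mulVec_self]
  exact add_pos (hP v hv) (hP v hv)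

open Filter Topology in
lemma exists_posDef_add_smul {P Q : Matrix ι ι ℝ} (hQ : Q.IsHermitian) (hP : P.PosDef) :
    ∃ t : ℝ, (Q + t • P).PosDef := by
  have hlim : Tendsto (fun t : ℝ => P + t⁻¹ • Q) atTop (𝓝 P) := by
    simpa using tendsto_const_nhds.add ((tendsto_inv_atTop_zero (𝕜 := ℝ)).smul_const Q)
  obtain ⟨t, hcone, ht⟩ := ((hlim.eventually (isOpen_posFormCone.mem_nhds hP.mem_posFormCone)).and
    (eventually_gt_atTop 0)).exists
  have heq : Q + t • P = t • (P + t⁻¹ • Q) := by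
    rw [smul_add, smul_smul, mul_inv_cancel₀ ht.ne', one_smul, add_comm]
  have hsymm : (Q + t • P).IsHermitian := hQ.add (hP.isHermitian.smul (IsSelfAdjoint.all t))
  refine ⟨t, hsymm.posDef_iff_mem_posFormCone.mpr ?_⟩
  rw [heq]
  exact smul_mem_posFormCone hcone ht

lemma IsHermitian.star_mulVec_dotProduct {α : Type*} [CommRing α] [StarRing α]
    {H : Matrix ι ι α} (hH : H.IsHermitian) (x y : ι → α) :
    star (H *ᵥ x) ⬝ᵥ y = star x ⬝ᵥ (H *ᵥ y) := by
  rw [star_mulVec, hH.eq, dotProduct_mulVec]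

lemma map_ofReal_mul {m n o : Type*} [Fintype n] (M : Matrix m n ℝ) (N : Matrix n o ℝ) :
    (M * N).map Complex.ofReal = M.map Complex.ofReal * N.map Complex.ofReal :=
  Matrix.map_mul (f := Complex.ofRealHom)

lemma conjTranspose_map_ofReal {m n : Type*} (A : Matrix m n ℝ) :
    (A.map Complex.ofReal)ᴴ = Aᵀ.map Complex.ofReal := by
  rw [← conjTranspose_eq_transpose_of_trivial, conjTranspose_map _ fun x => by simp]

variable [DecidableEq ι]

lemma isUnit_det_of_transpose_mul_mul_eq {R : Type*} [CommRing R] {A J : Matrix ι ι R}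
    (hJ : IsUnit J.det) (h : Aᵀ * J * A = J) : IsUnit A.det := by
  rw [← h, det_mul, det_mul, det_transpose] at hJ
  exact isUnit_of_mul_isUnit_right hJ

open scoped MatrixOrder in
lemma PosSemidef.map_ofReal {S : Matrix ι ι ℝ} (hS : S.PosSemidef) :
    (S.map Complex.ofReal).PosSemidef := by
  obtain ⟨B, rfl⟩ := CStarAlgebra.nonneg_iff_eq_star_mul_self.mp hS.nonneg
  rw [star_eq_conjTranspose, conjTranspose_eq_transpose_of_trivial, map_ofReal_mul,
    ← conjTranspose_map_ofReal]
  exact posSemidef_conjTranspose_mul_self _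

lemma exists_trace_mul_eq {R : Type*} [CommSemiring R] (f : Matrix ι ι R →ₗ[R] R) :
    ∃ X : Matrix ι ι R, ∀ P, f P = trace (X * P) := by
  refine ⟨of fun j i => f (single i j 1), fun P => ?_⟩
  conv_lhs => rw [matrix_eq_sum_single P]
  simp only [map_sum, trace, diag, mul_apply, of_apply]
  rw [Finset.sum_comm]
  refine Finset.sum_congr rfl fun i _ => Finset.sum_congr rfl fun j _ => ?_
  have hsingle : single j i (P j i) = P j i • single j i 1 := by
    rw [smul_single, smul_eq_mul, mul_one]
  rw [hsingle, map_smul, smul_eq_mul, mul_comm]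

lemma apply_nonpos_of_posSemidef {f : Matrix ι ι ℝ →ₗ[ℝ] ℝ}
    (hf : ∀ P ∈ posFormCone ι, f P < 0) {P : Matrix ι ι ℝ} (hP : P.PosSemidef) : f P ≤ 0 := by
  have hone : f 1 < 0 := hf 1 PosDef.one.mem_posFormCone
  refine le_of_forall_pos_lt_add fun ε hε => ?_
  have hδ : 0 < ε / -f 1 := div_pos hε (neg_pos.mpr hone)
  have := hf _ (PosDef.posSemidef_add hP (PosDef.one.smul hδ)).mem_posFormCone
  rw [map_add, map_smul, smul_eq_mul, div_mul_eq_mul_div, div_neg,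
    mul_div_cancel_right₀ _ hone.ne] at this
  linarith

lemma exists_posSemidef_mul_mul_transpose_eq (A : Matrix ι ι ℝ)
    (h : ∀ Y : Matrix ι ι ℝ, Aᵀ * Y * A - Y ∉ posFormCone ι) :
    ∃ S : Matrix ι ι ℝ, S.PosSemidef ∧ S ≠ 0 ∧ A * S * Aᵀ = S := by
  let L : Matrix ι ι ℝ →ₗ[ℝ] Matrix ι ι ℝ :=
    LinearMap.mulLeft ℝ Aᵀ ∘ₗ LinearMap.mulRight ℝ A - LinearMap.id
  have hL (Y : Matrix ι ι ℝ) : L Y = Aᵀ * Y * A - Y := by simp [L, mul_assoc]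
  obtain ⟨f, hf0, hfneg⟩ := geometric_hahn_banach_open_submodule (p := LinearMap.range L)
    convex_posFormCone isOpen_posFormCone <| Set.disjoint_left.mpr <| by
      rintro _ hP ⟨Y, rfl⟩
      exact h Y (hL Y ▸ hP)
  obtain ⟨X, hX⟩ := exists_trace_mul_eq (f : Matrix ι ι ℝ →ₗ[ℝ] ℝ)
  simp only [ContinuousLinearMap.coe_coe] at hX
  have hfix : A * X * Aᵀ = X := by
    refine ext_iff_trace_mul_right.mpr fun Y => ?_
    have := hf0 (L Y) (LinearMap.mem_range_self L Y)
    rw [hX, hL, mul_sub, trace_sub, sub_eq_zero] at this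
    calc trace (A * X * Aᵀ * Y) = trace (A * (X * Aᵀ * Y)) := by simp only [mul_assoc]
      _ = trace (X * (Aᵀ * Y * A)) := by rw [trace_mul_comm]; simp only [mul_assoc]
      _ = trace (X * Y) := this
  have hfixT : A * Xᵀ * Aᵀ = Xᵀ := by simpa [mul_assoc] using congrArg transpose hfix
  refine ⟨-(X + Xᵀ), .of_dotProduct_mulVec_nonneg ?_ fun v => ?_, fun h0 => ?_, ?_⟩
  · simp [IsHermitian, conjTranspose_eq_transpose_of_trivial, add_comm]
  · have hform : v ⬝ᵥ (X *ᵥ v) = f (vecMulVec v v) := by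
      rw [hX, mul_vecMulVec, trace_vecMulVec, dotProduct_comm]
    have := apply_nonpos_of_posSemidef (f := (f : Matrix ι ι ℝ →ₗ[ℝ] ℝ)) hfneg
      (by simpa using posSemidef_vecMulVec_self_star v)
    simp only [star_trivial, neg_mulVec, dotProduct_neg, add_mulVec, dotProduct_add,
      dotProduct_transpose_mulVec_self, hform]
    simp only [ContinuousLinearMap.coe_coe] at this
    linarith
  · have := congrArg trace h0
    rw [trace_neg, trace_add, trace_transpose, trace_zero, ← mul_one X, ← hX] at this
    linarith [hfneg 1 PosDef.one.mem_posFormCone]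
  · rw [mul_neg, neg_mul, mul_add, add_mul, hfix, hfixT]

lemma exists_eigenvector_mem_range_of_mul_eq_mul {K : Type*} [Field K] [IsAlgClosed K]
    {M H N : Matrix ι ι K} (hH0 : H ≠ 0) (hMH : M * H = H * N) :
    ∃ (z : K) (u : ι → K), H *ᵥ u ≠ 0 ∧ M *ᵥ (H *ᵥ u) = z • (H *ᵥ u) := by
  have hW : ∀ w ∈ LinearMap.range (toLin' H), toLin' M w ∈ LinearMap.range (toLin' H) := by
    rintro _ ⟨u, rfl⟩
    exact ⟨N *ᵥ u, by simp only [toLin'_apply, mulVec_mulVec, hMH]⟩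
  have : Nontrivial (LinearMap.range (toLin' H)) := by
    rwa [Submodule.nontrivial_iff_ne_bot, Ne, LinearMap.range_eq_bot,
      LinearEquiv.map_eq_zero_iff]
  obtain ⟨z, hz⟩ := Module.End.exists_eigenvalue ((toLin' M).restrict hW)
  obtain ⟨⟨_, u, rfl⟩, hw⟩ := hz.exists_hasEigenvector
  exact ⟨z, u, by simpa [Subtype.ext_iff] using hw.right,
    by simpa [Subtype.ext_iff] using hw.apply_eq_smul⟩

lemma exists_eigenvector_norm_eq_one_of_mul_mul_conjTranspose_eq {M H : Matrix ι ι ℂ}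
    (hM : IsUnit M.det) (hH : H.PosSemidef) (hH0 : H ≠ 0) (hMH : M * H * Mᴴ = H) :
    ∃ (z : ℂ) (v : ι → ℂ), ‖z‖ = 1 ∧ v ≠ 0 ∧ M *ᵥ v = z • v := by
  have hN : IsUnit Mᴴ.det := by rwa [det_conjTranspose, isUnit_star]
  have hMH' : M * H = H * Mᴴ⁻¹ := by
    calc M * H = M * H * (Mᴴ * Mᴴ⁻¹) := by rw [mul_nonsing_inv _ hN, mul_one]
      _ = H * Mᴴ⁻¹ := by rw [← mul_assoc, hMH]
  obtain ⟨z, u, hw0, hMw⟩ := exists_eigenvector_mem_range_of_mul_eq_mul hH0 hMH'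
  refine ⟨z, H *ᵥ u, ?_, hw0, hMw⟩
  -- `u' = Mᴴ⁻¹ u` has `H u' = z H u` but the same `H`-value as `u`, which forces `|z|² = 1`.
  set u' := Mᴴ⁻¹ *ᵥ u
  have hHu' : H *ᵥ u' = z • (H *ᵥ u) := by rw [mulVec_mulVec, ← hMH', ← mulVec_mulVec, hMw]
  have hq : star u ⬝ᵥ (H *ᵥ u) = star u' ⬝ᵥ (H *ᵥ u') := by
    have hu : u = Mᴴ *ᵥ u' := by rw [mulVec_mulVec, mul_nonsing_inv _ hN, one_mulVec]
    rw [hu, star_mulVec, conjTranspose_conjTranspose, ← dotProduct_mulVec, mulVec_mulVec,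
      mulVec_mulVec, hMH]
  have hq' : star u' ⬝ᵥ (H *ᵥ u') = star z * z * (star u ⬝ᵥ (H *ᵥ u)) := by
    rw [← hH.isHermitian.star_mulVec_dotProduct, hHu', star_smul, smul_dotProduct,
      hH.isHermitian.star_mulVec_dotProduct, hHu', dotProduct_smul, smul_eq_mul, smul_eq_mul,
      mul_assoc]
  have hq0 : star u ⬝ᵥ (H *ᵥ u) ≠ 0 := fun h => hw0 ((hH.dotProduct_mulVec_zero_iff u).mp h)
  have hz1 : star z * z = 1 := by
    rw [hq'] at hq
    exact (mul_eq_right₀ hq0).mp hq.symm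
  have hnorm : (‖z‖ : ℂ) ^ 2 = 1 := by rw [← Complex.conj_mul']; exact hz1
  exact (pow_eq_one_iff_of_nonneg (norm_nonneg z) two_ne_zero).mp (by exact_mod_cast hnorm)

lemma exists_eigenvector_norm_eq_one_of_mul_mul_transpose_eq {A S : Matrix ι ι ℝ}
    (hA : IsUnit A.det) (hS : S.PosSemidef) (hS0 : S ≠ 0) (hAS : A * S * Aᵀ = S) :
    ∃ (z : ℂ) (v : ι → ℂ), ‖z‖ = 1 ∧ v ≠ 0 ∧ A.map Complex.ofReal *ᵥ v = z • v := by
  refine exists_eigenvector_norm_eq_one_of_mul_mul_conjTranspose_eq ?_ hS.map_ofReal ?_ ?_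
  · have := hA.map Complex.ofRealHom
    rwa [RingHom.map_det] at this
  · exact fun h => hS0 <| map_injective Complex.ofReal_injective <|
      h.trans (Matrix.map_zero _ Complex.ofReal_zero).symm
  · rw [conjTranspose_map_ofReal, ← map_ofReal_mul, ← map_ofReal_mul, hAS]

theorem exists_isSymm_posDef_transpose_mul_mul_sub {A : Matrix ι ι ℝ} (hA : IsUnit A.det)
    (hspec : ∀ z : ℂ, ‖z‖ = 1 → ∀ v : ι → ℂ, A.map Complex.ofReal *ᵥ v = z • v → v = 0) :
    ∃ Y : Matrix ι ι ℝ, Y.IsSymm ∧ (Aᵀ * Y * A - Y).PosDef := by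
  obtain ⟨Y, hY⟩ : ∃ Y, Aᵀ * Y * A - Y ∈ posFormCone ι := by
    by_contra! h
    obtain ⟨S, hS, hS0, hAS⟩ := exists_posSemidef_mul_mul_transpose_eq A h
    obtain ⟨z, v, hz, hv, hAv⟩ :=
      exists_eigenvector_norm_eq_one_of_mul_mul_transpose_eq hA hS hS0 hAS
    exact hv (hspec z hz v hAv)
  refine ⟨Y + Yᵀ, isSymm_add_transpose_self Y, ?_⟩
  have hsymm : Aᵀ * (Y + Yᵀ) * A - (Y + Yᵀ) = (Aᵀ * Y * A - Y) + (Aᵀ * Y * A - Y)ᵀ := by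
    simp only [transpose_sub, transpose_mul, transpose_transpose, mul_add, add_mul, mul_assoc]
    abel
  rw [hsymm]
  exact posDef_add_transpose_of_mem_posFormCone hY

lemma PosDef.inv_transpose_mul_mul_inv_sub_neg {A Y : Matrix ι ι ℝ} (hA : IsUnit A.det)
    (h : (Aᵀ * Y * A - Y).PosDef) : ((A⁻¹)ᵀ * (-Y) * A⁻¹ - -Y).PosDef := by
  have h₁ : A * A⁻¹ = 1 := mul_nonsing_inv A hA
  have h₂ : (A⁻¹)ᵀ * Aᵀ = 1 := by rw [← transpose_mul, h₁, transpose_one]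
  have hU : IsUnit A⁻¹ := (isUnit_iff_isUnit_det _).mpr (isUnit_nonsing_inv_det A hA)
  have heq : (A⁻¹)ᵀ * (-Y) * A⁻¹ - -Y = star A⁻¹ * (Aᵀ * Y * A - Y) * A⁻¹ := by
    rw [star_eq_conjTranspose, conjTranspose_eq_transpose_of_trivial]
    calc (A⁻¹)ᵀ * (-Y) * A⁻¹ - -Y = ((A⁻¹)ᵀ * Aᵀ) * Y * (A * A⁻¹) - (A⁻¹)ᵀ * Y * A⁻¹ := by
          rw [h₁, h₂]; noncomm_ring
      _ = (A⁻¹)ᵀ * (Aᵀ * Y * A - Y) * A⁻¹ := by noncomm_ring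
  rw [heq]
  exact (Matrix.IsUnit.posDef_star_left_conjugate_iff hU).mpr h

end Matrix

lemma det_Jn (n : ℕ) : (Jn n).det = 1 := by
  simp [Jn, det_blockDiagonal, J2, det_fin_two_of]

/-- If `A ∈ Sp(2n)` is truly hyperbolic, then for every symmetric `Q` there is a
symmetric `Y` with `Q + (A⁻ᵀYA⁻¹ − Y)` positive definite: the positive cone at `A`
surjects onto the tangent space of the conjugacy-class space. -/
theorem truly_hyperbolic_positive_cone_surjects {n : ℕ}
    (A : Matrix (Fin 2 × Fin n) (Fin 2 × Fin n) ℝ)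
    (hA : Aᵀ * Jn n * A = Jn n) (hth : TrulyHyperbolic A) :
    ∀ Q : Matrix (Fin 2 × Fin n) (Fin 2 × Fin n) ℝ, Qᵀ = Q →
      ∃ Y : Matrix (Fin 2 × Fin n) (Fin 2 × Fin n) ℝ, Yᵀ = Y ∧
        (Q + (((A⁻¹)ᵀ) * Y * A⁻¹ - Y)).PosDef := by
  intro Q hQ
  have hdet : IsUnit A.det := isUnit_det_of_transpose_mul_mul_eq (det_Jn n ▸ isUnit_one) hA
  obtain ⟨Y₀, hY₀, hpos⟩ := exists_isSymm_posDef_transpose_mul_mul_sub hdet hth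
  obtain ⟨t, ht⟩ := exists_posDef_add_smul (Q := Q) (by simpa [IsHermitian] using hQ)
    (hpos.inv_transpose_mul_mul_inv_sub_neg hdet)
  refine ⟨t • -Y₀, by rw [transpose_smul, transpose_neg, hY₀.eq], ?_⟩
  rwa [Matrix.mul_smul, Matrix.smul_mul, ← smul_sub]
end
end
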